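/- arXiv:1706.05823 — 3 statements merged into one kernel-verified Lean document; each statement's English description precedes it below -/
import Mathlib

section
/- Let M be an abelian group, and let f, p : M → M be additive endomorphisms. Let N ⊆ M be a subgroup with f(N) ⊆ N and such that p(x) = x for all x ∈ N. If (f ∘ p - p)^{∘ K} = 0 as an endomorphism of M for some K ≥ 1, then the restriction of f to N is a bijection N → N. -/
open Set

namespace Module.End

variable {R M : Type*} [Ring R] [AddCommGroup M] [Module R M]

lemma bijOn_of_isUnit_restrict {f : End R M} {N : Submodule R M} (hf : MapsTo f N N)
    (hu : IsUnit (f.restrict hf)) : BijOn f N N :=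
  have hbij := (isUnit_iff _).1 hu
  ⟨hf, hf.restrict_inj.1 hbij.1, hf.restrict_surjective_iff.1 hbij.2⟩

lemma mapsTo_mul_sub {f p : End R M} {N : Submodule R M} (hf : MapsTo f N N)
    (hp : ∀ x ∈ N, p x = x) : MapsTo (f * p - p) N N := fun x hx => by
  simpa [hp x hx] using N.sub_mem (hf hx) hx

lemma restrict_mul_sub_eq_restrict_sub_one {f p : End R M} {N : Submodule R M}
    (hf : MapsTo f N N) (hp : ∀ x ∈ N, p x = x) :
    (f * p - p).restrict (mapsTo_mul_sub hf hp) = f.restrict hf - (1 : End R N) := by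
  ext x
  change f (p x) - p x = f x - x
  rw [hp x x.2]

theorem bijOn_of_isNilpotent_mul_sub {f p : End R M} {N : Submodule R M}
    (hf : MapsTo f N N) (hp : ∀ x ∈ N, p x = x) (h : IsNilpotent (f * p - p)) :
    BijOn f N N := by
  have hnil : IsNilpotent (f.restrict hf - (1 : End R N)) := by
    rw [← restrict_mul_sub_eq_restrict_sub_one hf hp]
    exact isNilpotent.restrict _ h
  refine bijOn_of_isUnit_restrict hf ?_
  simpa using hnil.isUnit_one_add

end Module.End

theorem stmt_5_general {M : Type*} [AddCommGroup M] (f p : AddMonoid.End M)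
    (N : AddSubgroup M) (hfN : ∀ x ∈ N, f x ∈ N) (hp : ∀ x ∈ N, p x = x)
    (K : ℕ) (h : (f * p - p) ^ K = 0) :
    Set.BijOn f (N : Set M) (N : Set M) := by
  let e := addMonoidEndRingEquivInt M
  have hnil : IsNilpotent (e f * e p - e p) :=
    ⟨K, by rw [← map_mul, ← map_sub, ← map_pow, h, map_zero]⟩
  exact Module.End.bijOn_of_isNilpotent_mul_sub (f := e f) (p := e p)
    (N := N.toIntSubmodule) (fun x hx => hfN x hx) hp hnil

/-- If `p` is the identity on an `f`-invariant subgroup `N` and `(f∘p - p)^K = 0`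
for some `K ≥ 1`, then `f` restricts to a bijection of `N`. -/
theorem stmt_5 {M : Type*} [AddCommGroup M] (f p : AddMonoid.End M)
    (N : AddSubgroup M) (hfN : ∀ x ∈ N, f x ∈ N) (hp : ∀ x ∈ N, p x = x)
    (K : ℕ) (hK : 1 ≤ K) (h : (f * p - p) ^ K = 0) :
    Set.BijOn f (N : Set M) (N : Set M) :=
  stmt_5_general f p N hfN hp K h
end

section
/- Let R be a ring, I a two-sided ideal of R with every element of I nilpotent, and e, e' ∈ R idempotents that are orthogonal modulo I (i.e., the images of e·e' and e'·e in R/I are zero). Then there exists an idempotent e'' ∈ R with e''·e = e·e'' = 0 and e'' ≡ e' (mod I). -/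
/-- Orthogonalization of idempotents modulo a nil ideal: if `e, e'` are
idempotents of `R` orthogonal modulo the nil two-sided ideal `I`, then there is
an idempotent `e''` genuinely orthogonal to `e` with `e'' ≡ e' (mod I)`. -/
theorem stmt_14 {R : Type*} [Ring R] (I : TwoSidedIdeal R)
    (hnil : ∀ x ∈ I, IsNilpotent x) (e e' : R)
    (he : e * e = e) (he' : e' * e' = e')
    (h1 : e * e' ∈ I) (h2 : e' * e ∈ I) :
    ∃ e'' : R, e'' * e'' = e'' ∧ e'' * e = 0 ∧ e * e'' = 0 ∧ e'' - e' ∈ I := by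
  let f : R →+* I.ringCon.Quotient := I.ringCon.mk'
  have hker : ∀ x, x ∈ RingHom.ker f ↔ x ∈ I := by
    intro x
    rw [RingHom.mem_ker]
    constructor
    · intro h
      have : I.ringCon x 0 := Quotient.eq''.mp h
      exact this
    · intro h
      exact Quotient.sound' h
  obtain ⟨e'', hidem, hfe, h3, h4⟩ :=
    exists_isIdempotentElem_mul_eq_zero_of_ker_isNilpotent f
      (fun x hx => hnil x ((hker x).mp hx)) (f e') ⟨e', rfl⟩
      (by show f e' * f e' = f e'; rw [← map_mul, he'])
      e he
      (by show f e' * f e = 0; rw [← map_mul]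
          exact (hker _).mpr h2)
      (by show f e * f e' = 0; rw [← map_mul]
          exact (hker _).mpr h1)
  refine ⟨e'', hidem, h3, h4, (hker _).mp ?_⟩
  rw [RingHom.mem_ker, map_sub, hfe, sub_self]
end

section
/- Let C be a preadditive category, F : C → D an additive functor to a preadditive category D, and f : P → R a morphism in C such that F is 'conservative up to nilpotents' in the sense that any endomorphism g of P with F(g) = 0 is nilpotent. If there exists t : R → P with F(t ∘ f) = id_{F(P)}, then t ∘ f is an automorphism of P, and hence f is a split monomorphism. -/
open CategoryTheory

/-- If an additive functor `F` kills only nilpotent endomorphisms of `P`, and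
`t : R ⟶ P` satisfies `F(t ∘ f) = id`, then `t ∘ f` (written `f ≫ t`) is an
automorphism of `P` and `f` is a split monomorphism. -/
theorem stmt_17 {C D : Type*} [Category C] [Category D] [Preadditive C]
    [Preadditive D] (F : C ⥤ D) [F.Additive]
    {P R : C} (f : P ⟶ R)
    (hcons : ∀ g : CategoryTheory.End P, F.map g = 0 → IsNilpotent g)
    (t : R ⟶ P) (ht : F.map (f ≫ t) = 𝟙 (F.obj P)) :
    IsIso (f ≫ t) ∧ ∃ r : R ⟶ P, f ≫ r = 𝟙 P := by
  have hg : F.map ((𝟙 P - f ≫ t : P ⟶ P) : CategoryTheory.End P) = 0 := by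
    simp [F.map_sub, ht]
  have hnil := hcons _ hg
  have hu : IsUnit (show CategoryTheory.End P from f ≫ t) := by
    have h := hnil.isUnit_one_sub
    simpa [sub_sub_cancel] using h
  have hiso : IsIso (f ≫ t) := (isUnit_iff_isIso (show CategoryTheory.End P from f ≫ t)).mp hu
  refine ⟨hiso, ⟨t ≫ inv (f ≫ t), by rw [← Category.assoc, IsIso.hom_inv_id]⟩⟩
end
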